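/- Let u be an n×n unitary matrix and let (Q_i)_{i∈I} be a finite family of diagonal positive semidefinite matrices with ∑_i Q_i(k,k) = λ_k for each k, where λ is a probability vector. Then ∑_{i∈I} ∑_j η(∑_k Q_i(k,k)|u(k,j)|²) - ∑_{i∈I} ∑_j η(Q_i(j,j)) ≤ ∑_j ∑_k λ_k η(|u(k,j)|²). -/

import Mathlib

/-!
Subadditivity of `η = negMulLog` on `[0, ∞)` bounds `η(∑ₖ Q i k |u k j|²)` by
`∑ₖ η(Q i k |u k j|²)`, and the Leibniz rule `η(st) = η(s) t + s η(t)` splits each term.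
Summing over `j`, the rows of `(|u k j|²)` sum to `1`, which leaves `∑ₖ η(Q i k)`; summing
over `i`, the weights `Q i k` add up to `lam k`.
-/

open Real Finset

theorem Matrix.sum_norm_sq_row_eq_one_of_mem_unitaryGroup {𝕜 n : Type*} [RCLike 𝕜] [Fintype n]
    [DecidableEq n] {U : Matrix n n 𝕜} (hU : U ∈ Matrix.unitaryGroup n 𝕜) (i : n) :
    ∑ j, ‖U i j‖ ^ 2 = 1 := by
  have hdiag : (U * star U) i i = 1 := by
    rw [Unitary.mul_star_self_of_mem hU, Matrix.one_apply_eq]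
  simp only [Matrix.mul_apply, Matrix.star_apply, RCLike.star_def, RCLike.mul_conj] at hdiag
  exact_mod_cast hdiag

lemma Real.neg_mul_log_le_negMulLog {x y : ℝ} (hx : 0 ≤ x) (hxy : x ≤ y) :
    -x * log y ≤ negMulLog x := by
  rcases hx.eq_or_lt with rfl | hx
  · simp
  · rw [negMulLog, neg_mul, neg_mul, neg_le_neg_iff]
    exact mul_le_mul_of_nonneg_left (log_le_log hx hxy) hx.le

lemma Real.negMulLog_sum_le {α : Type*} (s : Finset α) {f : α → ℝ} (hf : ∀ a ∈ s, 0 ≤ f a) :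
    negMulLog (∑ a ∈ s, f a) ≤ ∑ a ∈ s, negMulLog (f a) := by
  rw [negMulLog, neg_mul, Finset.sum_mul, ← Finset.sum_neg_distrib]
  refine Finset.sum_le_sum fun a ha => ?_
  rw [← neg_mul]
  exact neg_mul_log_le_negMulLog (hf a ha) (Finset.single_le_sum hf ha)

lemma Real.sum_negMulLog_vecMul_le {ι κ : Type*} [Fintype ι] [Fintype κ] {p : κ → ι → ℝ}
    (hp : ∀ k j, 0 ≤ p k j) (hrow : ∀ k, ∑ j, p k j = 1) {q : κ → ℝ} (hq : ∀ k, 0 ≤ q k) :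
    ∑ j, negMulLog (∑ k, q k * p k j) ≤
      ∑ k, negMulLog (q k) + ∑ j, ∑ k, q k * negMulLog (p k j) := by
  have hmixed : ∑ j, ∑ k, p k j * negMulLog (q k) = ∑ k, negMulLog (q k) := by
    rw [Finset.sum_comm]
    simp only [← Finset.sum_mul, hrow, one_mul]
  calc ∑ j, negMulLog (∑ k, q k * p k j)
      ≤ ∑ j, ∑ k, negMulLog (q k * p k j) :=
        Finset.sum_le_sum fun j _ =>
          negMulLog_sum_le _ fun k _ => mul_nonneg (hq k) (hp k j)
    _ = ∑ j, ∑ k, p k j * negMulLog (q k) + ∑ j, ∑ k, q k * negMulLog (p k j) := by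
        simp only [negMulLog_mul, Finset.sum_add_distrib]
    _ = ∑ k, negMulLog (q k) + ∑ j, ∑ k, q k * negMulLog (p k j) := by
        rw [hmixed]

theorem entropy_increment_bound_general {n : ℕ} {I : Type*} [Fintype I]
    (u : Matrix (Fin n) (Fin n) ℂ) (hu : u ∈ Matrix.unitaryGroup (Fin n) ℂ)
    (Q : I → Fin n → ℝ) (hQ : ∀ i k, 0 ≤ Q i k)
    (lam : Fin n → ℝ) (hsum : ∀ k, ∑ i, Q i k = lam k) :
    (∑ i, ∑ j, Real.negMulLog (∑ k, Q i k * ‖u k j‖ ^ 2)) -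
      (∑ i, ∑ j, Real.negMulLog (Q i j)) ≤
    ∑ j, ∑ k, lam k * Real.negMulLog (‖u k j‖ ^ 2) := by
  have hperI := fun i => sum_negMulLog_vecMul_le (fun k j => sq_nonneg ‖u k j‖)
    (Matrix.sum_norm_sq_row_eq_one_of_mem_unitaryGroup hu) (hQ i)
  have hweights : ∑ i, ∑ j, ∑ k, Q i k * negMulLog (‖u k j‖ ^ 2) =
      ∑ j, ∑ k, lam k * negMulLog (‖u k j‖ ^ 2) := by
    rw [Finset.sum_comm]
    refine Finset.sum_congr rfl fun j _ => ?_
    rw [Finset.sum_comm]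
    simp only [← Finset.sum_mul, hsum]
  rw [sub_le_iff_le_add', ← hweights, ← Finset.sum_add_distrib]
  exact Finset.sum_le_sum fun i _ => hperI i

theorem entropy_increment_bound {n : ℕ} {I : Type*} [Fintype I]
    (u : Matrix (Fin n) (Fin n) ℂ) (hu : u ∈ Matrix.unitaryGroup (Fin n) ℂ)
    (Q : I → Fin n → ℝ) (hQ : ∀ i k, 0 ≤ Q i k)
    (lam : Fin n → ℝ) (hsum : ∀ k, ∑ i, Q i k = lam k) (hl1 : ∑ k, lam k = 1) :
    (∑ i, ∑ j, Real.negMulLog (∑ k, Q i k * ‖u k j‖ ^ 2)) -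
      (∑ i, ∑ j, Real.negMulLog (Q i j)) ≤
    ∑ j, ∑ k, lam k * Real.negMulLog (‖u k j‖ ^ 2) :=
  entropy_increment_bound_general u hu Q hQ lam hsum
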